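/- arXiv:1610.09577 — 2 statements merged into one kernel-verified Lean document; each statement's English description precedes it below -/
import Mathlib

section
/- Let F be a homogeneous polynomial of degree k+2 on a vector space such that F and all of its partial derivatives of order ≤ k vanish on the affine cone over a projective variety E. Then F vanishes identically on the affine cone over the k-th secant variety S^k E. (Key step: if G is a polynomial of degree k+2 on ℙ^k that vanishes at the k+1 coordinate points together with all its derivatives of order ≤ k, then G = 0.) -/
open MvPolynomial

set_option linter.unusedSectionVars false

variable {K : Type*} [Field K] [CharZero K] {r : ℕ}

/-- Iterated partial derivative along the sequence of variables `d`. -/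
noncomputable def iterDeriv {j : ℕ} (d : Fin j → Fin r) (F : MvPolynomial (Fin r) K) :
    MvPolynomial (Fin r) K :=
  (List.ofFn d).foldl (fun p a => pderiv a p) F

/-! ### Auxiliary machinery -/

/-- Directional derivative along the vector `w`. -/
noncomputable def DDa (w : Fin r → K) (F : MvPolynomial (Fin r) K) : MvPolynomial (Fin r) K :=
  ∑ i, w i • pderiv i F

/-- Iterated directional derivatives along a list of vectors (head applied first). -/
noncomputable def Dlist : List (Fin r → K) → MvPolynomial (Fin r) K → MvPolynomial (Fin r) K
  | [], F => F
  | w :: l, F => Dlist l (DDa w F)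

/-- Iterated directional derivative along a single vector. -/
noncomputable def DDpow (w : Fin r → K) : ℕ → MvPolynomial (Fin r) K → MvPolynomial (Fin r) K
  | 0, F => F
  | j + 1, F => DDpow w j (DDa w F)

lemma pderiv_comm (i j : Fin r) (F : MvPolynomial (Fin r) K) :
    pderiv i (pderiv j F) = pderiv j (pderiv i F) := by
  induction F using MvPolynomial.induction_on' with
  | monomial s a =>
    rcases eq_or_ne i j with rfl | hij
    · rfl
    · simp only [pderiv_monomial]
      rw [tsub_tsub, tsub_tsub, add_comm]
      congr 1
      rw [Finsupp.tsub_apply, Finsupp.tsub_apply,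
        Finsupp.single_eq_of_ne hij, Finsupp.single_eq_of_ne (Ne.symm hij)]
      simp only [Nat.sub_zero]
      ring
  | add p q hp hq => simp [map_add, hp, hq]

lemma DDa_add (w : Fin r → K) (F G : MvPolynomial (Fin r) K) :
    DDa w (F + G) = DDa w F + DDa w G := by
  simp [DDa, map_add, smul_add, Finset.sum_add_distrib]

lemma DDa_smul (w : Fin r → K) (c : K) (F : MvPolynomial (Fin r) K) :
    DDa w (c • F) = c • DDa w F := by
  simp [DDa, map_smul, Finset.smul_sum, smul_comm c]

lemma DDa_zero (w : Fin r → K) : DDa w (0 : MvPolynomial (Fin r) K) = 0 := by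
  simp [DDa]

lemma DDa_C (w : Fin r → K) (c : K) : DDa w (C c : MvPolynomial (Fin r) K) = 0 := by
  simp [DDa, pderiv_C]

lemma DDa_comm (w u : Fin r → K) (F : MvPolynomial (Fin r) K) :
    DDa w (DDa u F) = DDa u (DDa w F) := by
  simp only [DDa, map_sum, map_smul, Finset.smul_sum]
  rw [Finset.sum_comm]
  refine Finset.sum_congr rfl fun i _ => Finset.sum_congr rfl fun j _ => ?_
  rw [Derivation.map_smul, Derivation.map_smul, pderiv_comm, smul_comm]

lemma Dlist_nil (F : MvPolynomial (Fin r) K) : Dlist [] F = F := rfl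

lemma Dlist_cons (w : Fin r → K) (l : List (Fin r → K)) (F : MvPolynomial (Fin r) K) :
    Dlist (w :: l) F = Dlist l (DDa w F) := rfl

lemma Dlist_DDa (l : List (Fin r → K)) (w : Fin r → K) (F : MvPolynomial (Fin r) K) :
    Dlist l (DDa w F) = DDa w (Dlist l F) := by
  induction l generalizing F with
  | nil => rfl
  | cons a l ih => rw [Dlist_cons, Dlist_cons, DDa_comm, ih]

lemma Dlist_replicate_append (j : ℕ) (w : Fin r → K) (l : List (Fin r → K))
    (F : MvPolynomial (Fin r) K) :
    Dlist (List.replicate j w ++ l) F = Dlist l (DDpow w j F) := by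
  induction j generalizing F with
  | zero => rfl
  | succ j ih => rw [List.replicate_succ, List.cons_append, Dlist_cons, ih]; rfl

lemma Dlist_replicate (j : ℕ) (w : Fin r → K) (F : MvPolynomial (Fin r) K) :
    Dlist (List.replicate j w) F = DDpow w j F := by
  simpa [Dlist_nil] using Dlist_replicate_append j w [] F

lemma Dlist_DDpow (l : List (Fin r → K)) (w : Fin r → K) (j : ℕ) (F : MvPolynomial (Fin r) K) :
    Dlist l (DDpow w j F) = DDpow w j (Dlist l F) := by
  induction j generalizing F with
  | zero => rfl
  | succ j ih =>
    show Dlist l (DDpow w j (DDa w F)) = DDpow w j (DDa w (Dlist l F))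
    rw [ih, Dlist_DDa]

lemma DDpow_succ' (w : Fin r → K) (j : ℕ) (F : MvPolynomial (Fin r) K) :
    DDpow w (j + 1) F = DDa w (DDpow w j F) := by
  induction j generalizing F with
  | zero => rfl
  | succ j ih =>
    show DDpow w (j+1) (DDa w F) = DDa w (DDpow w j (DDa w F))
    rw [ih]

lemma DDpow_add (w : Fin r → K) (a b : ℕ) (F : MvPolynomial (Fin r) K) :
    DDpow w (a + b) F = DDpow w b (DDpow w a F) := by
  induction b with
  | zero => rfl
  | succ b ih => rw [← Nat.add_assoc, DDpow_succ', ih, ← DDpow_succ']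

lemma DDpow_zero_poly (w : Fin r → K) (j : ℕ) : DDpow w j (0 : MvPolynomial (Fin r) K) = 0 := by
  induction j with
  | zero => rfl
  | succ j ih => show DDpow w j (DDa w 0) = 0; rw [DDa_zero, ih]

/-! ### Homogeneity lemmas -/

lemma degree_sub_single {m : Fin r →₀ ℕ} {i : Fin r} (h : m i ≠ 0) :
    (m - Finsupp.single i 1).degree + 1 = m.degree := by
  have hle : Finsupp.single i 1 ≤ m := Finsupp.single_le_iff.2 (by omega)
  have hm : (m - Finsupp.single i 1) + Finsupp.single i 1 = m := tsub_add_cancel_of_le hle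
  have : ((m - Finsupp.single i 1) + Finsupp.single i 1).degree
      = (m - Finsupp.single i 1).degree + (Finsupp.single i 1).degree := by
    rw [Finsupp.degree_eq_weight_one, map_add]
  rw [hm] at this
  have h1 : (Finsupp.single i 1 : Fin r →₀ ℕ).degree = 1 := by
    simp [Finsupp.degree_apply, Finsupp.support_single_ne_zero _ one_ne_zero]
  omega

lemma IsHomogeneous.pderiv' {F : MvPolynomial (Fin r) K} {n : ℕ} (i : Fin r)
    (hF : F.IsHomogeneous (n + 1)) : (pderiv i F).IsHomogeneous n := by
  have : pderiv i F = ∑ m ∈ F.support,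
      monomial (m - Finsupp.single i 1) (coeff m F * (m i : K)) := by
    conv_lhs => rw [← support_sum_monomial_coeff F]
    rw [map_sum]
    simp [pderiv_monomial]
  rw [this]
  apply MvPolynomial.IsHomogeneous.sum
  intro m hm
  by_cases h : m i = 0
  · simp only [h, Nat.cast_zero, mul_zero]
    rw [monomial_zero]
    exact isHomogeneous_zero _ _ _
  · apply isHomogeneous_monomial
    have hdeg : m.degree = n + 1 := by
      by_contra hne
      exact (Finsupp.mem_support_iff.1 hm) (hF.coeff_eq_zero hne)
    have := degree_sub_single (m := m) (i := i) h
    omega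

lemma DDa_homog {F : MvPolynomial (Fin r) K} {n : ℕ} (w : Fin r → K)
    (hF : F.IsHomogeneous (n + 1)) : (DDa w F).IsHomogeneous n := by
  apply MvPolynomial.IsHomogeneous.sum
  intro i _
  rw [smul_eq_C_mul]
  simpa using (isHomogeneous_C _ (w i)).mul (IsHomogeneous.pderiv' i hF)

lemma DDpow_homog {F : MvPolynomial (Fin r) K} {d : ℕ} (w : Fin r → K) (j : ℕ)
    (hj : j ≤ d) (hF : F.IsHomogeneous d) : (DDpow w j F).IsHomogeneous (d - j) := by
  induction j generalizing F d with
  | zero => simpa [DDpow] using hF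
  | succ j ih =>
    obtain ⟨d', rfl⟩ : ∃ d', d = d' + 1 := ⟨d - 1, by omega⟩
    have h1 : (DDa w F).IsHomogeneous d' := DDa_homog w hF
    have := ih (by omega) h1
    show (DDpow w j (DDa w F)).IsHomogeneous (d' + 1 - (j+1))
    simpa using this

lemma Dlist_homog {F : MvPolynomial (Fin r) K} {d : ℕ} (l : List (Fin r → K))
    (hl : l.length ≤ d) (hF : F.IsHomogeneous d) : (Dlist l F).IsHomogeneous (d - l.length) := by
  induction l generalizing F d with
  | nil => simpa [Dlist] using hF
  | cons a l ih =>
    obtain ⟨d', rfl⟩ : ∃ d', d = d' + 1 := ⟨d - 1, by simp at hl; omega⟩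
    have h1 : (DDa a F).IsHomogeneous d' := DDa_homog a hF
    have := ih (by simp at hl; omega) h1
    rw [Dlist_cons]
    simp only [List.length_cons]
    have he : d' + 1 - (l.length + 1) = d' - l.length := by omega
    rw [he]
    exact this

lemma homog0_eq_C {F : MvPolynomial (Fin r) K} (hF : F.IsHomogeneous 0) :
    F = C (coeff 0 F) := by
  ext d
  rcases eq_or_ne d 0 with rfl | hd
  · simp
  · rw [hF.coeff_eq_zero (by rwa [Ne, Finsupp.degree_eq_zero_iff]), coeff_C,
      if_neg (Ne.symm hd)]

lemma DDpow_eq_zero {F : MvPolynomial (Fin r) K} {d : ℕ} (w : Fin r → K)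
    (hF : F.IsHomogeneous d) {j : ℕ} (hj : d < j) : DDpow w j F = 0 := by
  obtain ⟨s, rfl⟩ : ∃ s, j = d + (s + 1) := ⟨j - d - 1, by omega⟩
  rw [DDpow_add]
  have h0 : (DDpow w d F).IsHomogeneous 0 := by simpa using DDpow_homog w d le_rfl hF
  rw [homog0_eq_C h0]
  show DDpow w s (DDa w _) = 0
  rw [DDa_C, DDpow_zero_poly]

lemma eval_zero_of_homog {F : MvPolynomial (Fin r) K} {d : ℕ} (hF : F.IsHomogeneous d)
    (hd : d ≠ 0) : eval (0 : Fin r → K) F = 0 := by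
  rw [eval_zero]
  exact hF.coeff_eq_zero (by simpa using Ne.symm hd)

/-! ### Bridge from `iterDeriv` vanishing to `Dlist` vanishing -/

lemma foldl_pderiv_add (l : List (Fin r)) (F G : MvPolynomial (Fin r) K) :
    l.foldl (fun p a => pderiv a p) (F + G) =
      l.foldl (fun p a => pderiv a p) F + l.foldl (fun p a => pderiv a p) G := by
  induction l generalizing F G with
  | nil => rfl
  | cons a l ih => simp only [List.foldl_cons, map_add]; exact ih _ _

lemma foldl_pderiv_smul (l : List (Fin r)) (c : K) (F : MvPolynomial (Fin r) K) :
    l.foldl (fun p a => pderiv a p) (c • F) = c • l.foldl (fun p a => pderiv a p) F := by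
  induction l generalizing F with
  | nil => rfl
  | cons a l ih => simp only [List.foldl_cons, Derivation.map_smul]; exact ih _

lemma iterDeriv_add {j : ℕ} (d : Fin j → Fin r) (F G : MvPolynomial (Fin r) K) :
    iterDeriv d (F + G) = iterDeriv d F + iterDeriv d G := foldl_pderiv_add _ F G

lemma iterDeriv_smul {j : ℕ} (d : Fin j → Fin r) (c : K) (F : MvPolynomial (Fin r) K) :
    iterDeriv d (c • F) = c • iterDeriv d F := foldl_pderiv_smul _ c F

/-- `iterDeriv` as a linear map. -/
noncomputable def iterDerivL {j : ℕ} (d : Fin j → Fin r) :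
    MvPolynomial (Fin r) K →ₗ[K] MvPolynomial (Fin r) K where
  toFun := iterDeriv d
  map_add' := iterDeriv_add d
  map_smul' := iterDeriv_smul d

lemma iterDeriv_cons {j : ℕ} (i : Fin r) (d : Fin j → Fin r) (F : MvPolynomial (Fin r) K) :
    iterDeriv (Fin.cons i d) F = iterDeriv d (pderiv i F) := by
  simp only [iterDeriv, List.ofFn_succ, Fin.cons_zero, Fin.cons_succ, List.foldl_cons]

lemma bridge (Cset : Set (Fin r → K)) (l : List (Fin r → K)) (F : MvPolynomial (Fin r) K)
    (h : ∀ d : Fin l.length → Fin r, ∀ v ∈ Cset, eval v (iterDeriv d F) = 0) :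
    ∀ v ∈ Cset, eval v (Dlist l F) = 0 := by
  induction l generalizing F with
  | nil =>
    intro v hv
    have := h (fun x => x.elim0) v hv
    simpa [iterDeriv, Dlist] using this
  | cons w l ih =>
    intro v hv
    rw [Dlist_cons]
    refine ih (DDa w F) ?_ v hv
    intro d v' hv'
    have hD : iterDeriv d (DDa w F) = ∑ i, w i • iterDeriv d (pderiv i F) := by
      show iterDerivL d (DDa w F) = _
      rw [DDa, map_sum]
      simp only [map_smul]
      rfl
    rw [hD, map_sum]
    refine Finset.sum_eq_zero fun i _ => ?_
    rw [MvPolynomial.smul_eq_C_mul, map_mul, eval_C, ← iterDeriv_cons,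
      h (Fin.cons i d) v' hv', mul_zero]

/-! ### Restriction to a line -/

/-- Substitution `X i ↦ q i + p i * t`, turning `F` into a single-variable polynomial. -/
noncomputable def Phi (q p : Fin r → K) : MvPolynomial (Fin r) K →ₐ[K] Polynomial K :=
  aeval (fun i => Polynomial.C (q i) + Polynomial.C (p i) * Polynomial.X)

lemma DDa_mul_X (p : Fin r → K) (f : MvPolynomial (Fin r) K) (i : Fin r) :
    DDa p (f * X i) = DDa p f * X i + p i • f := by
  simp only [DDa, pderiv_mul, smul_add, Finset.sum_add_distrib]
  congr 1
  · rw [Finset.sum_mul]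
    exact Finset.sum_congr rfl fun j _ => (smul_mul_assoc _ _ _).symm
  · rw [Finset.sum_eq_single i]
    · rw [pderiv_X_self, mul_one]
    · intro j _ hj
      rw [pderiv_X_of_ne (Ne.symm hj), mul_zero, smul_zero]
    · intro hi; exact absurd (Finset.mem_univ i) hi

lemma Phi_deriv (q p : Fin r → K) (F : MvPolynomial (Fin r) K) :
    Polynomial.derivative (Phi q p F) = Phi q p (DDa p F) := by
  induction F using MvPolynomial.induction_on with
  | C a => simp [Phi, DDa_C]
  | add f g hf hg => rw [map_add, map_add, DDa_add, map_add, hf, hg]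
  | mul_X f i hf =>
    have hXi : Phi q p (X i) = Polynomial.C (q i) + Polynomial.C (p i) * Polynomial.X := by
      simp [Phi]
    have hC : ∀ c : K, Phi q p (C c) = Polynomial.C c := by
      intro c; simp [Phi, Polynomial.algebraMap_eq]
    have hsmul : Phi q p (p i • f) = Polynomial.C (p i) * Phi q p f := by
      rw [MvPolynomial.smul_eq_C_mul, map_mul, hC]
    have hd : Polynomial.derivative (Polynomial.C (q i) + Polynomial.C (p i) * Polynomial.X) =
        Polynomial.C (p i) := by simp
    rw [map_mul (Phi q p), hXi, Polynomial.derivative_mul, hf, hd, DDa_mul_X,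
      map_add (Phi q p), map_mul (Phi q p), hXi, hsmul]
    ring

lemma Phi_deriv_iter (q p : Fin r → K) (F : MvPolynomial (Fin r) K) (j : ℕ) :
    (⇑Polynomial.derivative)^[j] (Phi q p F) = Phi q p (DDpow p j F) := by
  induction j generalizing F with
  | zero => rfl
  | succ j ih => rw [Function.iterate_succ_apply, Phi_deriv, ih]; rfl

lemma Phi_eval (q p : Fin r → K) (F : MvPolynomial (Fin r) K) (t : K) :
    Polynomial.eval t (Phi q p F) = eval (fun i => q i + p i * t) F := by
  induction F using MvPolynomial.induction_on with
  | C a => simp [Phi, Polynomial.algebraMap_eq]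
  | add f g hf hg => rw [map_add, Polynomial.eval_add, hf, hg, map_add]
  | mul_X f i hf =>
    have hXi : Phi q p (X i) = Polynomial.C (q i) + Polynomial.C (p i) * Polynomial.X := by
      simp [Phi]
    rw [map_mul (Phi q p), hXi, Polynomial.eval_mul, hf]
    simp [eval_X]

lemma Phi_coeff (q p : Fin r → K) (F : MvPolynomial (Fin r) K) (j : ℕ) :
    (j.factorial : K) * (Phi q p F).coeff j = eval q (DDpow p j F) := by
  have h1 := Polynomial.coeff_iterate_derivative (k := j) (Phi q p F) 0
  rw [Phi_deriv_iter, Polynomial.coeff_zero_eq_eval_zero, Phi_eval] at h1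
  have hfun : (fun i => q i + p i * 0) = q := by funext i; ring
  rw [hfun] at h1
  rw [h1, zero_add, Nat.descFactorial_self, nsmul_eq_mul]

lemma Phi_zero_homog (p : Fin r → K) {F : MvPolynomial (Fin r) K} {n : ℕ}
    (hF : F.IsHomogeneous n) :
    Phi 0 p F = Polynomial.C (eval p F) * Polynomial.X ^ n := by
  have hfun : (fun i => Polynomial.C ((0 : Fin r → K) i) + Polynomial.C (p i) * Polynomial.X)
      = fun i => Polynomial.C (p i) * Polynomial.X := by funext i; simp
  show aeval _ F = _
  rw [hfun, aeval_def, eval₂_eq, eval_eq, map_sum, Finset.sum_mul]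
  refine Finset.sum_congr rfl fun d hd => ?_
  have hdeg : d.degree = n := by
    by_contra hne
    exact (Finsupp.mem_support_iff.1 hd) (hF.coeff_eq_zero hne)
  have hprod : (∏ i ∈ d.support, (Polynomial.C (p i) * Polynomial.X) ^ d i)
      = Polynomial.C (∏ i ∈ d.support, p i ^ d i) * Polynomial.X ^ n := by
    rw [map_prod]
    rw [← hdeg, Finsupp.degree_apply, ← Finset.prod_pow_eq_pow_sum, ← Finset.prod_mul_distrib]
    exact Finset.prod_congr rfl fun i _ => by rw [mul_pow, map_pow]
  rw [hprod, Polynomial.algebraMap_eq, map_mul]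
  ring

lemma M2 (n : ℕ) : ∀ (d₁ : ℕ) (F₁ : MvPolynomial (Fin r) K), F₁.IsHomogeneous d₁ →
    (∀ l : List (Fin r → K), l.length = d₁ → Dlist l F₁ = 0) →
    ∀ p : Fin n → (Fin r → K), eval (∑ a, p a) F₁ = 0 := by
  induction n with
  | zero =>
    intro d₁ F₁ hF₁ hyp p
    have hsum : (∑ a : Fin 0, p a) = (0 : Fin r → K) := by simp
    rw [hsum]
    rcases Nat.eq_zero_or_pos d₁ with h0 | hpos
    · have hz : F₁ = 0 := by
        have := hyp [] (by simp [h0])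
        simpa [Dlist] using this
      simp [hz]
    · exact eval_zero_of_homog hF₁ (by omega)
  | succ n ih =>
    intro d₁ F₁ hF₁ hyp p
    set q : Fin r → K := ∑ a : Fin n, p a.castSucc with hq
    set pL := p (Fin.last n) with hpL
    have key : ∀ j : ℕ, eval q (DDpow pL j F₁) = 0 := by
      intro j
      rcases lt_or_ge j d₁ with hj | hj
      · refine ih (d₁ - j) (DDpow pL j F₁) (DDpow_homog pL j (le_of_lt hj) hF₁) ?_
          (fun a => p a.castSucc)
        intro l hl
        rw [← Dlist_replicate_append]
        exact hyp _ (by simp [hl]; omega)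
      · obtain ⟨s, rfl⟩ : ∃ s, j = d₁ + s := ⟨j - d₁, by omega⟩
        rw [DDpow_add]
        have h0 : DDpow pL d₁ F₁ = 0 := by
          rw [← Dlist_replicate]
          exact hyp _ (by simp)
        rw [h0, DDpow_zero_poly, map_zero]
    have hPhi : Phi q pL F₁ = 0 := Polynomial.ext fun j => by
      have h := Phi_coeff q pL F₁ j
      rw [key j] at h
      have hfac : (j.factorial : K) ≠ 0 := Nat.cast_ne_zero.2 (Nat.factorial_ne_zero j)
      rw [Polynomial.coeff_zero]
      exact (mul_eq_zero.1 h).resolve_left hfac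
    have hsum : (∑ a : Fin (n+1), p a) = fun i => q i + pL i * 1 := by
      funext i
      simp [hq, hpL, Finset.sum_apply, mul_one, Fin.sum_univ_castSucc]
    rw [hsum, ← Phi_eval, hPhi, Polynomial.eval_zero]

lemma Mmain (Cset : Set (Fin r → K)) (n : ℕ) :
    ∀ (δ d : ℕ) (F : MvPolynomial (Fin r) K), 1 ≤ δ →
    F.IsHomogeneous d →
    (∀ l : List (Fin r → K), l.length + δ ≤ d → ∀ v ∈ Cset, eval v (Dlist l F) = 0) →
    n * (δ - 1) < d →
    ∀ p : Fin n → (Fin r → K), (∀ a, p a ∈ Cset) → eval (∑ a, p a) F = 0 := by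
  induction n with
  | zero =>
    intro δ d F hδ hF hyp hcond p hp
    have hsum : (∑ a : Fin 0, p a) = (0 : Fin r → K) := by simp
    rw [hsum]
    exact eval_zero_of_homog hF (by omega)
  | succ n ih =>
    intro δ d F hδ hF hyp hcond p hp
    have hδd : δ ≤ d := by
      have h1 : δ - 1 ≤ (n+1) * (δ-1) := Nat.le_mul_of_pos_left _ (by omega)
      omega
    set q : Fin r → K := ∑ a : Fin n, p a.castSucc with hq
    set pL := p (Fin.last n) with hpL
    have key : ∀ j : ℕ, eval q (DDpow pL j F) = 0 := by
      intro j
      rcases lt_or_ge j δ with hj | hj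
      · refine ih δ (d - j) (DDpow pL j F) hδ (DDpow_homog pL j (by omega) hF) ?_ ?_
          (fun a => p a.castSucc) (fun a => hp _)
        · intro l hl v hv
          rw [← Dlist_replicate_append]
          refine hyp _ ?_ v hv
          simp only [List.length_append, List.length_replicate]
          omega
        · have he : (n+1) * (δ-1) = n * (δ-1) + (δ-1) := by ring
          omega
      · rcases lt_or_ge d j with hdj | hjd
        · rw [DDpow_eq_zero pL hF hdj, map_zero]
        · refine M2 n (d - j) (DDpow pL j F) (DDpow_homog pL j hjd hF) ?_
            (fun a => p a.castSucc)
          intro l hl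
          rw [Dlist_DDpow]
          have hK'h : (Dlist l F).IsHomogeneous j := by
            have hh := Dlist_homog l (by omega) hF
            rw [hl] at hh
            have he : d - (d - j) = j := by omega
            rwa [he] at hh
          have hvan : eval pL (Dlist l F) = 0 := hyp l (by omega) pL (hp _)
          have hphi0 : Phi 0 pL (Dlist l F) = 0 := by
            rw [Phi_zero_homog pL hK'h, hvan]; simp
          have h0 : (DDpow pL j (Dlist l F)).IsHomogeneous 0 := by
            simpa using DDpow_homog pL j le_rfl hK'h
          have hCeq := homog0_eq_C h0
          have hzero : Phi 0 pL (DDpow pL j (Dlist l F)) = 0 := by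
            rw [← Phi_deriv_iter, hphi0, Polynomial.iterate_derivative_zero]
          rw [hCeq] at hzero
          have hCc : Phi 0 pL (C (coeff 0 (DDpow pL j (Dlist l F))))
              = Polynomial.C (coeff 0 (DDpow pL j (Dlist l F))) := by
            simp [Phi, Polynomial.algebraMap_eq]
          rw [hCc, Polynomial.C_eq_zero] at hzero
          rw [hCeq, hzero, map_zero]
    have hPhi : Phi q pL F = 0 := Polynomial.ext fun j => by
      have h := Phi_coeff q pL F j
      rw [key j] at h
      have hfac : (j.factorial : K) ≠ 0 := Nat.cast_ne_zero.2 (Nat.factorial_ne_zero j)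
      rw [Polynomial.coeff_zero]
      exact (mul_eq_zero.1 h).resolve_left hfac
    have hsum : (∑ a : Fin (n+1), p a) = fun i => q i + pL i * 1 := by
      funext i
      simp [hq, hpL, Finset.sum_apply, mul_one, Fin.sum_univ_castSucc]
    rw [hsum, ← Phi_eval, hPhi, Polynomial.eval_zero]


/-- If a homogeneous polynomial `F` of degree `k+2` vanishes, together
with all of its partial derivatives of order `≤ k`, on the affine cone `C` over a
projective variety `E`, then `F` vanishes identically on the affine cone over the `k`-th
secant variety `S^k E` (the Zariski closure of the union of `k`-planes through `k+1`
points of `E`, whose affine cone is the closure of the set of sums of `k+1` points of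
`C`). -/
theorem stmt13 (k : ℕ) (F : MvPolynomial (Fin r) K) (hF : F.IsHomogeneous (k + 2))
    (C : Set (Fin r → K)) (hcone : ∀ (c : K), ∀ v ∈ C, c • v ∈ C)
    (hvan : ∀ j : ℕ, j ≤ k → ∀ d : Fin j → Fin r, ∀ v ∈ C, eval v (iterDeriv d F) = 0) :
    ∀ v ∈ zeroLocus K (vanishingIdeal K
        {w | ∃ p : Fin (k+1) → (Fin r → K), (∀ a, p a ∈ C) ∧ w = ∑ a, p a}),
      eval v F = 0 := by
  intro v hv
  have hmem : F ∈ vanishingIdeal K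
      {w | ∃ p : Fin (k+1) → (Fin r → K), (∀ a, p a ∈ C) ∧ w = ∑ a, p a} := by
    rw [mem_vanishingIdeal_iff]
    rintro w ⟨p, hp, rfl⟩
    refine Mmain C (k+1) 2 (k+2) F (by omega) hF ?_ (by omega) p hp
    intro l hl v' hv'
    refine bridge C l F ?_ v' hv'
    intro d
    exact hvan l.length (by omega) d
  exact (mem_zeroLocus_iff.1 hv) F hmem
end

section
/- Let Y = ⊕_{i=1}^{k} Y_i be a vector space with a skew-symmetric bilinear form ω, and W ⊆ gl(Y) a subspace such that (W1) every element of W maps each Y_i into ⊕_{j≠i} Y_j (i.e., W has zero diagonal blocks), and (W2) for each pair i₁ ≠ i₂, the projection of W to Hom(Y_{i₁}, Y_{i₂}) contains no rank-1 elements. Then the first standard prolongation W^{(1)} = {Φ ∈ Hom(Y, W) : Φ(y₁)y₂ = Φ(y₂)y₁}, viewed inside gl(W ⊕ Y) appropriately, again has zero diagonal blocks with respect to the induced splitting, and its off-diagonal block projections contain no rank-1 elements. -/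
/-- Let `Y = ⊕ᵢ Yᵢ` be a finite-dimensional vector space with a
skew-symmetric bilinear form `ω` (with projections `π i` onto the summands), and let
`W ⊆ gl(Y)` satisfy: (W1) every element of `W` has zero diagonal blocks, and (W2) for
every pair `i ≠ j`, the projection of `W` to `Hom(Yᵢ, Yⱼ)` contains no rank-one element.
Then every `Φ` in the first standard prolongation
`W^{(1)} = {Φ ∈ Hom(Y, W) : Φ(y₁)y₂ = Φ(y₂)y₁}`, viewed inside `gl(W ⊕ Y)` via
`(w, y) ↦ (Φ(y), 0)` and the induced splitting `Y'ᵢ = (⊕_{j≠i} π_{j,i}(W)) ⊕ Yᵢ` (so that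
its `(i₁, i₂)`-block is `y ↦ π_{i₂} ∘ Φ(π_{i₁} y)`), again has zero diagonal blocks, and
its off-diagonal block projections contain no rank-one elements. -/
theorem stmt19 {K Y : Type*} [Field K] [CharZero K] [AddCommGroup Y] [Module K Y]
    [FiniteDimensional K Y]
    (ω : LinearMap.BilinForm K Y) (hskew : ∀ v w, ω v w = - ω w v)
    (k : ℕ) (Yi : Fin k → Submodule K Y)
    (π : Fin k → (Y →ₗ[K] Y))
    (hmem : ∀ i x, π i x ∈ Yi i)
    (hid : ∀ i, ∀ v ∈ Yi i, π i v = v)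
    (hzero : ∀ i j, i ≠ j → ∀ v ∈ Yi j, π i v = 0)
    (hsum : ∑ i, π i = LinearMap.id)
    (W : Submodule K (Y →ₗ[K] Y))
    (hW1 : ∀ A ∈ W, ∀ i, (π i) ∘ₗ A ∘ₗ (π i) = 0)
    (hW2 : ∀ i j, i ≠ j → ∀ A ∈ W,
      Module.finrank K (LinearMap.range ((π j) ∘ₗ A ∘ₗ (π i))) ≠ 1)
    (Φ : Y →ₗ[K] (Y →ₗ[K] Y))
    (hΦW : ∀ y, Φ y ∈ W) (hΦsym : ∀ y₁ y₂, Φ y₁ y₂ = Φ y₂ y₁) :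
    (∀ i y, (π i) ∘ₗ (Φ (π i y)) = 0) ∧
    (∀ i₁ i₂, i₁ ≠ i₂ →
      ∀ Ψ : Y →ₗ[K] (Y →ₗ[K] Y), (∀ y, Ψ y = (π i₂) ∘ₗ (Φ (π i₁ y))) →
        Module.finrank K (LinearMap.range Ψ) ≠ 1) := by

  constructor
  · intro i y
    ext z
    have h1 : Φ (π i y) z = Φ z (π i y) := hΦsym _ _
    have h2 := hW1 (Φ z) (hΦW z) i
    have h3 : (π i ∘ₗ Φ z ∘ₗ π i) y = 0 := by rw [h2]; rfl
    simpa [LinearMap.comp_apply, h1] using h3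
  · intro i₁ i₂ hne Ψ hΨ hrank
    obtain ⟨⟨B, hBmem⟩, hB0, hBall⟩ := finrank_eq_one_iff'.mp hrank
    have hBne : B ≠ 0 := fun h => hB0 (Subtype.ext h)
    obtain ⟨z₀, hz₀⟩ : ∃ z, B z ≠ 0 := by
      by_contra h
      push_neg at h
      exact hBne (LinearMap.ext h)
    obtain ⟨y₀, hy₀⟩ := LinearMap.mem_range.mp hBmem
    -- key identity: (π i₂ ∘ Φ z₀ ∘ π i₁) y = Ψ y z₀
    have key : ∀ y, (π i₂ ∘ₗ Φ z₀ ∘ₗ π i₁) y = Ψ y z₀ := by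
      intro y
      rw [hΨ y]
      simp only [LinearMap.comp_apply]
      rw [hΦsym (π i₁ y) z₀]
    have hmul : ∀ y, ∃ c : K, Ψ y = c • B := by
      intro y
      obtain ⟨c, hc⟩ := hBall ⟨Ψ y, LinearMap.mem_range_self Ψ y⟩
      exact ⟨c, (congrArg Subtype.val hc).symm⟩
    have hrange : LinearMap.range (π i₂ ∘ₗ Φ z₀ ∘ₗ π i₁) = Submodule.span K {B z₀} := by
      apply le_antisymm
      · rintro _ ⟨y, rfl⟩
        rw [key y]
        obtain ⟨c, hc⟩ := hmul y
        rw [hc]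
        exact Submodule.smul_mem _ c (Submodule.mem_span_singleton_self _)
      · rw [Submodule.span_singleton_le_iff_mem]
        obtain ⟨c, hc⟩ := hmul y₀
        have hcne : c ≠ 0 := by
          rintro rfl
          rw [zero_smul, hy₀] at hc
          exact hBne hc
        refine ⟨c⁻¹ • y₀, ?_⟩
        rw [map_smul, key y₀, hc]
        simp [smul_smul, inv_mul_cancel₀ hcne]
    have : Module.finrank K (LinearMap.range (π i₂ ∘ₗ Φ z₀ ∘ₗ π i₁)) = 1 := by
      rw [hrange]
      exact finrank_span_singleton hz₀
    exact hW2 i₁ i₂ hne (Φ z₀) (hΦW z₀) this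
end
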